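/- In R = k[[x,y]] with k algebraically closed, let a := (x² + y³, x³)R. Then y⁵ is integral over a but y⁵ ∉ a, and y⁴ is not integral over a. -/

import Mathlib

set_option synthInstance.maxHeartbeats 1000000
set_option maxHeartbeats 2000000

open ENNReal

noncomputable section

/-- Substitution `φ* f = f(φ₁, φ₂)` of a pair of one-variable power series (with zero constant
term) into a power series `f` in two variables, defined coefficientwise via truncations. -/
def subst2 {k : Type*} [Field k] (φ : Fin 2 → PowerSeries k)
    (f : MvPowerSeries (Fin 2) k) : PowerSeries k :=
  PowerSeries.mk fun nn => ∑ ij ∈ Finset.range (nn + 1) ×ˢ Finset.range (nn + 1),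
    (MvPowerSeries.coeff (Finsupp.single (0 : Fin 2) ij.1 + Finsupp.single (1 : Fin 2) ij.2)
      f) * PowerSeries.coeff nn ((φ 0) ^ ij.1 * (φ 1) ^ ij.2)

/-- An element `h` is integral over the ideal `a`:
`h^N + a₁ h^(N-1) + ⋯ + a_N = 0` for some `N ≥ 1` and `a_j ∈ a^j`. -/
def integralOver {A : Type*} [CommRing A] (a : Ideal A) (h : A) : Prop :=
  ∃ N : ℕ, 0 < N ∧ ∃ c : ℕ → A, (∀ j ∈ Finset.Icc 1 N, c j ∈ a ^ j) ∧
    h ^ N + ∑ j ∈ Finset.Icc 1 N, c j * h ^ (N - j) = 0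

namespace Statement18Aux

open MvPowerSeries Finset

variable {k : Type*} [Field k]

/-- The exponent vector of `x^i y^j` as a `Fin 2 →₀ ℕ`. -/
def Dd (i j : ℕ) : Fin 2 →₀ ℕ := Finsupp.single 0 i + Finsupp.single 1 j

lemma Dd_le (a b i j : ℕ) : Dd a b ≤ Dd i j ↔ a ≤ i ∧ b ≤ j := by
  simp [Dd, Finsupp.le_def, Fin.forall_fin_two, Finsupp.single_apply]

lemma Dd_sub (a b i j : ℕ) : Dd i j - Dd a b = Dd (i - a) (j - b) := by
  ext s
  fin_cases s <;> simp [Dd, Finsupp.tsub_apply, Finsupp.single_apply]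

lemma coeff_shift (i j a b : ℕ) (h : MvPowerSeries (Fin 2) k) :
    MvPowerSeries.coeff (Dd i j) (X 0 ^ a * X 1 ^ b * h) =
      if a ≤ i ∧ b ≤ j then MvPowerSeries.coeff (Dd (i - a) (j - b)) h else 0 := by
  rw [X_pow_eq, X_pow_eq, monomial_mul_monomial, mul_one, coeff_monomial_mul]
  have hD : (Finsupp.single (0 : Fin 2) a + Finsupp.single 1 b) = Dd a b := rfl
  rw [hD]
  by_cases hc : a ≤ i ∧ b ≤ j
  · rw [if_pos ((Dd_le a b i j).mpr hc), if_pos hc, one_mul, Dd_sub]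
  · rw [if_neg, if_neg hc]
    exact fun hle => hc ((Dd_le a b i j).mp hle)

/-- Index set for the weighted-degree-`n` coefficient of the substitution `x ↦ t³, y ↦ -t²`. -/
def Sn (n : ℕ) : Finset (ℕ × ℕ) :=
  (Finset.range (n + 1) ×ˢ Finset.range (n + 1)).filter fun p => 3 * p.1 + 2 * p.2 = n

/-- The degree-`n` coefficient of `h(t³, -t²)`. -/
def Lf (n : ℕ) (h : MvPowerSeries (Fin 2) k) : k :=
  ∑ p ∈ Sn n, (-1 : k) ^ p.2 * MvPowerSeries.coeff (Dd p.1 p.2) h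

lemma Lf_zero (n : ℕ) : Lf (k := k) n 0 = 0 := by simp [Lf]

lemma Lf_add (n : ℕ) (g h : MvPowerSeries (Fin 2) k) :
    Lf n (g + h) = Lf n g + Lf n h := by
  simp [Lf, mul_add, Finset.sum_add_distrib]

lemma Lf_sum {ι : Type*} (n : ℕ) (s : Finset ι) (F : ι → MvPowerSeries (Fin 2) k) :
    Lf n (∑ j ∈ s, F j) = ∑ j ∈ s, Lf n (F j) := by
  simp only [Lf, map_sum, Finset.mul_sum]
  exact Finset.sum_comm

lemma Lf_shift (n a b : ℕ) (h : MvPowerSeries (Fin 2) k) :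
    Lf n (X 0 ^ a * X 1 ^ b * h) =
      if 3 * a + 2 * b ≤ n then (-1 : k) ^ b * Lf (n - (3 * a + 2 * b)) h else 0 := by
  classical
  unfold Lf
  simp only [coeff_shift, mul_ite, mul_zero]
  rw [← Finset.sum_filter]
  split_ifs with hn
  · rw [Finset.mul_sum]
    refine Finset.sum_nbij' (fun p => (p.1 - a, p.2 - b)) (fun q => (q.1 + a, q.2 + b))
      ?_ ?_ ?_ ?_ ?_
    · intro p hp
      simp only [Sn, Finset.mem_filter, Finset.mem_product, Finset.mem_range] at hp ⊢
      omega
    · intro q hq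
      simp only [Sn, Finset.mem_filter, Finset.mem_product, Finset.mem_range] at hq ⊢
      omega
    · intro p hp
      simp only [Sn, Finset.mem_filter, Finset.mem_product, Finset.mem_range] at hp
      ext <;> simp <;> omega
    · intro q hq
      simp only [Sn, Finset.mem_filter, Finset.mem_product, Finset.mem_range] at hq
      ext <;> simp
    · intro p hp
      simp only [Sn, Finset.mem_filter, Finset.mem_product, Finset.mem_range] at hp
      rw [← mul_assoc, ← pow_add, Nat.add_sub_cancel' hp.2.2]
  · rw [Finset.filter_false_of_mem, Finset.sum_empty]
    intro p hp
    simp only [Sn, Finset.mem_filter, Finset.mem_product, Finset.mem_range] at hp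
    omega

lemma Lf_one : Lf (k := k) 0 1 = 1 := by
  have hS : Sn 0 = {(0, 0)} := by decide
  simp [Lf, hS, Dd]

lemma Lf_f_mul (n : ℕ) (h : MvPowerSeries (Fin 2) k) :
    Lf n ((X 0 ^ 2 + X 1 ^ 3) * h) = 0 := by
  have e : (X 0 ^ 2 + X 1 ^ 3 : MvPowerSeries (Fin 2) k) * h =
      X 0 ^ 2 * X 1 ^ 0 * h + X 0 ^ 0 * X 1 ^ 3 * h := by ring
  rw [e, Lf_add, Lf_shift, Lf_shift]
  norm_num
  split_ifs <;> ring

lemma pow_le_sup' {A : Type*} [CommRing A] (f g : A) :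
    ∀ m : ℕ, (Ideal.span {f, g}) ^ (m + 1) ≤ Ideal.span {f} ⊔ Ideal.span {g ^ (m + 1)} := by
  intro m
  induction m with
  | zero => rw [pow_one, pow_one, show ({f, g} : Set A) = insert f {g} from rfl,
      Ideal.span_insert]
  | succ m ih =>
    calc Ideal.span {f, g} ^ (m + 2) = Ideal.span {f, g} ^ (m + 1) * Ideal.span {f, g} := by
          rw [pow_succ]
      _ ≤ (Ideal.span {f} ⊔ Ideal.span {g ^ (m + 1)}) * (Ideal.span {f} ⊔ Ideal.span {g}) := by
          apply Ideal.mul_mono ih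
          rw [show ({f, g} : Set A) = insert f {g} from rfl, Ideal.span_insert]
      _ ≤ Ideal.span {f} ⊔ Ideal.span {g ^ (m + 2)} := by
          rw [Ideal.sup_mul, Ideal.mul_sup, Ideal.mul_sup,
            Ideal.span_singleton_mul_span_singleton (g ^ (m + 1)) g, ← pow_succ]
          refine sup_le (sup_le ?_ ?_) (sup_le ?_ ?_)
          · exact le_sup_of_le_left Ideal.mul_le_right
          · exact le_sup_of_le_left Ideal.mul_le_left
          · exact le_sup_of_le_left Ideal.mul_le_right
          · exact le_sup_right

end Statement18Aux

open Statement18Aux in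
/-- In `R = k[[x,y]]` with `k` algebraically closed, let
`a := (x² + y³, x³)R`.  Then `y⁵` is integral over `a` but `y⁵ ∉ a`, and `y⁴` is not integral
over `a`. -/
theorem example_integral_closure
    (k : Type*) [Field k] [IsAlgClosed k] :
    integralOver (Ideal.span {(MvPowerSeries.X 0 : MvPowerSeries (Fin 2) k) ^ 2 +
        MvPowerSeries.X 1 ^ 3, MvPowerSeries.X 0 ^ 3})
      ((MvPowerSeries.X 1 : MvPowerSeries (Fin 2) k) ^ 5) ∧
    (MvPowerSeries.X 1 : MvPowerSeries (Fin 2) k) ^ 5 ∉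
      Ideal.span {(MvPowerSeries.X 0 : MvPowerSeries (Fin 2) k) ^ 2 + MvPowerSeries.X 1 ^ 3,
        MvPowerSeries.X 0 ^ 3} ∧
    ¬ integralOver (Ideal.span {(MvPowerSeries.X 0 : MvPowerSeries (Fin 2) k) ^ 2 +
        MvPowerSeries.X 1 ^ 3, MvPowerSeries.X 0 ^ 3})
      ((MvPowerSeries.X 1 : MvPowerSeries (Fin 2) k) ^ 4) := by
  set f : MvPowerSeries (Fin 2) k := MvPowerSeries.X 0 ^ 2 + MvPowerSeries.X 1 ^ 3 with hfdef
  set g : MvPowerSeries (Fin 2) k := MvPowerSeries.X 0 ^ 3 with hgdef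
  set a : Ideal (MvPowerSeries (Fin 2) k) := Ideal.span {f, g} with hadef
  have hf : f ∈ a := Ideal.subset_span (by simp)
  have hg : g ∈ a := Ideal.subset_span (by simp)
  refine ⟨?_, ?_, ?_⟩
  · -- y⁵ is integral over a
    refine ⟨3, by norm_num,
      fun j => if j = 3 then -((MvPowerSeries.X 1 : MvPowerSeries (Fin 2) k) ^ 15) else 0,
      ?_, ?_⟩
    · intro j hj
      simp only [Finset.mem_Icc] at hj
      obtain ⟨hj1, hj2⟩ := hj
      have h15 : (MvPowerSeries.X 1 : MvPowerSeries (Fin 2) k) ^ 15 ∈ a ^ 3 := by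
        have hkey : (MvPowerSeries.X 1 : MvPowerSeries (Fin 2) k) ^ 15 =
            (f ^ 2 - 5 * f * MvPowerSeries.X 0 ^ 2 + 10 * MvPowerSeries.X 0 ^ 4) * (f * f * f) +
            (5 * MvPowerSeries.X 0 ^ 2 - 10 * f) * (f * g * g) +
            (-(MvPowerSeries.X 0)) * (g * g * g) := by
          rw [hfdef, hgdef]; ring
        rw [hkey, pow_succ, pow_two]
        exact add_mem (add_mem
          (Ideal.mul_mem_left _ _ (Ideal.mul_mem_mul (Ideal.mul_mem_mul hf hf) hf))
          (Ideal.mul_mem_left _ _ (Ideal.mul_mem_mul (Ideal.mul_mem_mul hf hg) hg)))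
          (Ideal.mul_mem_left _ _ (Ideal.mul_mem_mul (Ideal.mul_mem_mul hg hg) hg))
      interval_cases j
      · simpa using zero_mem (a ^ 1)
      · simpa using zero_mem (a ^ 2)
      · simpa using h15
    · simp only [ite_mul, zero_mul]
      rw [Finset.sum_ite_eq' (Finset.Icc 1 3) 3]
      rw [if_pos (by norm_num)]
      ring
  · -- y⁵ ∉ a
    intro hmem
    rw [hadef, Ideal.mem_span_pair] at hmem
    obtain ⟨u, v, huv⟩ := hmem
    have huv' : (MvPowerSeries.X 0 ^ 2 * MvPowerSeries.X 1 ^ 0 * u +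
        MvPowerSeries.X 0 ^ 0 * MvPowerSeries.X 1 ^ 3 * u +
        MvPowerSeries.X 0 ^ 3 * MvPowerSeries.X 1 ^ 0 * v : MvPowerSeries (Fin 2) k) =
        MvPowerSeries.X 0 ^ 0 * MvPowerSeries.X 1 ^ 5 * 1 := by
      rw [← huv, hfdef, hgdef]; ring
    have h1 := congrArg (MvPowerSeries.coeff (Dd 0 5)) huv'
    have h2 := congrArg (MvPowerSeries.coeff (Dd 2 2)) huv'
    have hD0 : Dd 0 0 = 0 := by simp [Dd]
    simp only [map_add, coeff_shift] at h1 h2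
    norm_num [hD0, MvPowerSeries.coeff_zero_one] at h1 h2
    rw [h2] at h1
    exact zero_ne_one h1
  · -- y⁴ is not integral over a
    rintro ⟨N, hN, c, hc, heq⟩
    have happ := congrArg (Lf (8 * N)) heq
    rw [Lf_zero, Lf_add, Lf_sum] at happ
    have hmain : Lf (8 * N) ((MvPowerSeries.X 1 ^ 4 : MvPowerSeries (Fin 2) k) ^ N) = 1 := by
      have e : (MvPowerSeries.X 1 ^ 4 : MvPowerSeries (Fin 2) k) ^ N =
          MvPowerSeries.X 0 ^ 0 * MvPowerSeries.X 1 ^ (4 * N) * 1 := by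
        rw [pow_zero, one_mul, mul_one, pow_mul]
      rw [e, Lf_shift, if_pos (by omega),
        show 8 * N - (3 * 0 + 2 * (4 * N)) = 0 by omega, Lf_one, mul_one]
      exact Even.neg_one_pow ⟨2 * N, by ring⟩
    have hterm : ∀ j ∈ Finset.Icc 1 N,
        Lf (8 * N) (c j * (MvPowerSeries.X 1 ^ 4 : MvPowerSeries (Fin 2) k) ^ (N - j)) = 0 := by
      intro j hj
      simp only [Finset.mem_Icc] at hj
      obtain ⟨m, rfl⟩ : ∃ m, j = m + 1 := ⟨j - 1, by omega⟩
      have hmem : c (m + 1) ∈ Ideal.span {f} ⊔ Ideal.span {g ^ (m + 1)} :=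
        pow_le_sup' f g m (hc (m + 1) (by simp only [Finset.mem_Icc]; omega))
      obtain ⟨u, hu, v, hv, hcv⟩ := Submodule.mem_sup.mp hmem
      obtain ⟨p, hp⟩ := Ideal.mem_span_singleton'.mp hu
      obtain ⟨q, hq⟩ := Ideal.mem_span_singleton'.mp hv
      have e : c (m + 1) * (MvPowerSeries.X 1 ^ 4 : MvPowerSeries (Fin 2) k) ^ (N - (m + 1)) =
          (MvPowerSeries.X 0 ^ 2 + MvPowerSeries.X 1 ^ 3) *
            (p * MvPowerSeries.X 1 ^ (4 * (N - (m + 1)))) +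
          MvPowerSeries.X 0 ^ (3 * (m + 1)) * MvPowerSeries.X 1 ^ (4 * (N - (m + 1))) * q := by
        rw [← hcv, ← hp, ← hq, hfdef, hgdef, pow_mul, pow_mul]
        ring
      rw [e, Lf_add, Lf_f_mul, Lf_shift, if_neg (by omega), add_zero]
    rw [hmain, Finset.sum_eq_zero hterm, add_zero] at happ
    exact one_ne_zero happ

end
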